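/- arXiv:2410.14513 — 2 statements merged into one kernel-verified Lean document; each statement's English description precedes it below -/
import Mathlib

section
/- For the GARCH-CPC model with parameters ω ≥ 0, α > 0, φ > 0, β̃ ≥ 0 and β̃ + α γ₁² < ρ < 1: for every sequence of innovations (z_t) in ℝ and any initial values h_0 ≥ 0, q_0 ≥ 0, the recursively defined sequences satisfy h_t ≥ 0 and q_t ≥ 0 for all t ≥ 0 (positivity of the variance process). -/
open Real

theorem cpc_q_step_nonneg {ω ρ φ q x : ℝ} (hω : 0 ≤ ω) (hρ : 0 ≤ ρ) (hφ : 0 ≤ φ)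
    (hq : 0 ≤ q) : 0 ≤ ω + ρ * q + φ * x ^ 2 := by
  positivity

/-- Substituting the `q`-recursion, the negative term `-α γ₁² q` is absorbed by `ρ q`. -/
theorem cpc_h_step_nonneg {ω α φ β ρ γ₁ q h x y : ℝ} (hω : 0 ≤ ω) (hα : 0 ≤ α) (hφ : 0 ≤ φ)
    (hβ : 0 ≤ β) (hρ : β + α * γ₁ ^ 2 ≤ ρ) (hq : 0 ≤ q) (hh : 0 ≤ h) :
    0 ≤ (ω + ρ * q + φ * x ^ 2) + β * (h - q) + α * (y ^ 2 - γ₁ ^ 2 * q) := by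
  have hgap : 0 ≤ ρ - β - α * γ₁ ^ 2 := by linarith
  calc (0 : ℝ) ≤ ω + β * h + (ρ - β - α * γ₁ ^ 2) * q + φ * x ^ 2 + α * y ^ 2 := by positivity
    _ = _ := by ring

theorem cpc_positivity_all_t_general
    (ω α φ β ρ γ₁ γ₂ : ℝ) (z h q : ℕ → ℝ)
    (hω : 0 ≤ ω) (hα : 0 < α) (hφ : 0 < φ) (hβ : 0 ≤ β)
    (hρ₁ : β + α * γ₁ ^ 2 < ρ)
    (hq0 : 0 ≤ q 0) (hh0 : 0 ≤ h 0)
    (hqrec : ∀ t, q (t + 1) = ω + ρ * q t + φ * (z t - γ₂ * Real.sqrt (h t)) ^ 2)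
    (hhrec : ∀ t, h (t + 1) = q (t + 1) + β * (h t - q t)
        + α * ((z t - γ₁ * Real.sqrt (h t)) ^ 2 - γ₁ ^ 2 * q t)) :
    ∀ t, 0 ≤ h t ∧ 0 ≤ q t := by
  have hρ : 0 ≤ ρ := (add_nonneg hβ (by positivity)).trans hρ₁.le
  intro t
  induction t with
  | zero => exact ⟨hh0, hq0⟩
  | succ t ih =>
    obtain ⟨hh, hq⟩ := ih
    refine ⟨?_, hqrec t ▸ cpc_q_step_nonneg hω hρ hφ.le hq⟩
    rw [hhrec t, hqrec t]
    exact cpc_h_step_nonneg hω hα.le hφ.le hβ hρ₁.le hq hh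

theorem cpc_positivity_all_t
    (ω α φ β ρ γ₁ γ₂ : ℝ) (z h q : ℕ → ℝ)
    (hω : 0 ≤ ω) (hα : 0 < α) (hφ : 0 < φ) (hβ : 0 ≤ β)
    (hρ₁ : β + α * γ₁ ^ 2 < ρ) (hρ₂ : ρ < 1)
    (hq0 : 0 ≤ q 0) (hh0 : 0 ≤ h 0)
    (hqrec : ∀ t, q (t + 1) = ω + ρ * q t + φ * (z t - γ₂ * Real.sqrt (h t)) ^ 2)
    (hhrec : ∀ t, h (t + 1) = q (t + 1) + β * (h t - q t)
        + α * ((z t - γ₁ * Real.sqrt (h t)) ^ 2 - γ₁ ^ 2 * q t)) :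
    ∀ t, 0 ≤ h t ∧ 0 ≤ q t :=
  cpc_positivity_all_t_general ω α φ β ρ γ₁ γ₂ z h q hω hα hφ hβ hρ₁ hq0 hh0 hqrec hhrec
end

section
/- One-step recursion of the moment generating function coefficients for GARCH-CPC: Suppose A', B₁', B₂' are real numbers with α B₁' + φ B₂' < 1/2, and define A = A' + rφ̂ + B₂' ω - (1/2) log(1 - 2(α B₁' + φ B₂')), B₁ = B₁'(β̃ + α γ₁²) + λφ̂ + B₂' φ γ₂² + 2(α γ₁ B₁' + φ γ₂ B₂' - φ̂/2)²/(1 - 2(α B₁' + φ B₂')), B₂ = B₂'(ρ + φ γ₂²) + λφ̂ + 2(α γ₁ B₁' + φ γ₂ B₂' - φ̂/2)²/(1 - 2(α B₁' + φ B₂')). Then for any s ∈ ℝ, h ≥ q ≥ 0 with h ≥ 0, and Z standard normal, with (R, h', q') given by the risk-neutral GARCH-CPC one-step dynamics driven by Z from state (s, h, q): E[exp(φ̂(s + R) + A' + B₁'(h'' - q'') + B₂' q'')] = exp(φ̂ s + A + B₁(h - q) + B₂ q), where (h'', q'') is the next variance state computed from (h, q) and Z. -/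
/-!
Expanding `(Z - γ₁√h)²` and `(Z - γ₂√h)²` turns the exponent into a quadratic `K + aZ² + bZ` in `Z`,
with `a = αB₁' + φB₂'`, `b = -2(αγ₁B₁' + φγ₂B₂' - φ̂/2)√h` and `K` free of `Z`, so the expectation
is `exp K` times the Gaussian moment `E[exp(aZ² + bZ)] = exp(b²/(2(1-2a)) - ½ log(1-2a))`,
finite exactly when `a < 1/2`. Since `b² = 4(…)²h`, the result is again affine in `(h - q, q)`.
-/

open MeasureTheory ProbabilityTheory Real

lemma integral_exp_neg_mul_sq_add_mul {a : ℝ} (ha : 0 < a) (c : ℝ) :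
    ∫ x, exp (-a * x ^ 2 + c * x) = √(π / a) * exp (c ^ 2 / (4 * a)) := by
  have complete_square (x : ℝ) :
      exp (-a * x ^ 2 + c * x) = exp (-a * (x - c / (2 * a)) ^ 2) * exp (c ^ 2 / (4 * a)) := by
    rw [← exp_add]
    congr 1
    field_simp
    ring
  simp_rw [complete_square, integral_mul_const]
  rw [integral_sub_right_eq_self (fun x ↦ exp (-a * x ^ 2)), integral_gaussian]

lemma integral_exp_quadratic_gaussianReal {a : ℝ} (ha : a < 1 / 2) (b : ℝ) :
    ∫ z, exp (a * z ^ 2 + b * z) ∂gaussianReal 0 1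
      = exp (b ^ 2 / (2 * (1 - 2 * a)) - 1 / 2 * log (1 - 2 * a)) := by
  have hpos : 0 < 1 - 2 * a := by linarith
  have density (z : ℝ) : gaussianPDFReal 0 1 z • exp (a * z ^ 2 + b * z)
      = (√(2 * π))⁻¹ * exp (-((1 - 2 * a) / 2) * z ^ 2 + b * z) := by
    rw [gaussianPDFReal, smul_eq_mul, mul_assoc, ← exp_add]
    congr 2
    · simp
    · push_cast
      ring
  have sqrt_ratio : √(π / ((1 - 2 * a) / 2)) = √(2 * π) / √(1 - 2 * a) := by
    rw [← sqrt_div' _ hpos.le]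
    congr 1
    field_simp
  have exp_half_log : exp (1 / 2 * log (1 - 2 * a)) = √(1 - 2 * a) := by
    rw [sqrt_eq_rpow, rpow_def_of_pos hpos, mul_comm]
  rw [integral_gaussianReal_eq_integral_smul one_ne_zero]
  simp_rw [density]
  have exponent : b ^ 2 / (4 * ((1 - 2 * a) / 2)) = b ^ 2 / (2 * (1 - 2 * a)) := by ring
  rw [integral_const_mul, integral_exp_neg_mul_sq_add_mul (by linarith), sqrt_ratio, exponent,
    exp_sub, exp_half_log]
  have : √(2 * π) ≠ 0 := by positivity
  field_simp

theorem cpc_mgf_recursion_step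
    (ω ρ φ γ₁ γ₂ α β lam r φ' A' B₁' B₂' s h q : ℝ)
    (hh : 0 ≤ q) (hhq : q ≤ h)
    (ha : α * B₁' + φ * B₂' < 1/2) :
    let A := A' + r * φ' + B₂' * ω
        - (1/2) * Real.log (1 - 2 * (α * B₁' + φ * B₂'))
    let B₁ := B₁' * (β + α * γ₁ ^ 2) + lam * φ' + B₂' * φ * γ₂ ^ 2
        + 2 * (α * γ₁ * B₁' + φ * γ₂ * B₂' - φ' / 2) ^ 2
            / (1 - 2 * (α * B₁' + φ * B₂'))
    let B₂ := B₂' * (ρ + φ * γ₂ ^ 2) + lam * φ'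
        + 2 * (α * γ₁ * B₁' + φ * γ₂ * B₂' - φ' / 2) ^ 2
            / (1 - 2 * (α * B₁' + φ * B₂'))
    (∫ z, Real.exp (φ' * (s + (r + lam * h + Real.sqrt h * z))
        + A'
        + B₁' * (((ω + ρ * q + φ * (z - γ₂ * Real.sqrt h) ^ 2)
              + β * (h - q)
              + α * ((z - γ₁ * Real.sqrt h) ^ 2 - γ₁ ^ 2 * q))
            - (ω + ρ * q + φ * (z - γ₂ * Real.sqrt h) ^ 2))
        + B₂' * (ω + ρ * q + φ * (z - γ₂ * Real.sqrt h) ^ 2))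
        ∂(gaussianReal 0 1))
      = Real.exp (φ' * s + A + B₁ * (h - q) + B₂ * q) := by
  set a := α * B₁' + φ * B₂'
  set c := α * γ₁ * B₁' + φ * γ₂ * B₂' - φ' / 2
  intro A B₁ B₂
  set K := φ' * (s + r + lam * h) + A' + B₁' * (β + α * γ₁ ^ 2) * (h - q)
    + B₂' * (ω + ρ * q + φ * γ₂ ^ 2 * h)
  have hsq : √h ^ 2 = h := sq_sqrt (hh.trans hhq)
  have hne : 1 - 2 * a ≠ 0 := by linarith
  calc _ = ∫ z, exp K * exp (a * z ^ 2 + -2 * c * √h * z) ∂gaussianReal 0 1 := by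
        congr 1
        ext z
        rw [← exp_add]
        congr 1
        linear_combination (α * γ₁ ^ 2 * B₁' + φ * γ₂ ^ 2 * B₂') * hsq
    _ = exp K * exp ((-2 * c * √h) ^ 2 / (2 * (1 - 2 * a)) - 1 / 2 * log (1 - 2 * a)) := by
        rw [integral_const_mul, integral_exp_quadratic_gaussianReal ha]
    _ = _ := by
        rw [← exp_add]
        congr 1
        simp only [A, B₁, B₂, K]
        field_simp
        linear_combination (4 * c ^ 2) * hsq
end
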